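/- arXiv:1712.08688 — 3 statements merged into one kernel-verified Lean document; each statement's English description precedes it below -/
import Mathlib

section
/- The family {φ_{l,i} : 1 ≤ l ≤ n, i odd, 1 ≤ i ≤ 2^l - 1} of one-dimensional hierarchical hat functions is linearly independent, and hence dim V_n = 2^n - 1. -/
noncomputable def hat (x : ℝ) : ℝ := max 0 (1 - |x|)

noncomputable def hatLI (l i : ℕ) (x : ℝ) : ℝ :=
  hat ((x - (i : ℝ) * (2 : ℝ) ^ (-(l : ℤ))) * (2 : ℝ) ^ (l : ℤ))

lemma hat_zero : hat 0 = 1 := by simp [hat]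

lemma hat_cast_ne (a b : ℕ) (h : a ≠ b) : hat ((a : ℝ) - b) = 0 := by
  have h1 : (1 : ℝ) ≤ |(a : ℝ) - b| := by
    have : ((a : ℤ) - b) ≠ 0 := by
      intro e; apply h; omega
    have h2 : (1 : ℤ) ≤ |(a : ℤ) - b| := Int.one_le_abs this
    calc (1:ℝ) = ((1:ℤ):ℝ) := by norm_num
      _ ≤ ((|(a:ℤ) - b| : ℤ) : ℝ) := by exact_mod_cast h2
      _ = |(a:ℝ) - b| := by push_cast; ring_nf
  unfold hat
  rw [max_eq_left (by linarith)]

lemma eval_node (l l' i i' : ℕ) (h : l ≤ l') :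
    hatLI l' i' ((i : ℝ) * 2 ^ (-(l : ℤ))) = hat (((i * 2 ^ (l' - l) : ℕ) : ℝ) - i') := by
  unfold hatLI
  congr 1
  have h2 : (2 : ℝ) ≠ 0 := two_ne_zero
  have e1 : (2:ℝ) ^ (-(l:ℤ)) * 2 ^ ((l':ℤ)) = 2 ^ (((l' - l : ℕ)) : ℤ) := by
    rw [← zpow_add₀ h2]; congr 1; omega
  have e2 : (2:ℝ) ^ (-(l':ℤ)) * 2 ^ ((l':ℤ)) = 1 := by
    rw [← zpow_add₀ h2]; simp
  have : ((i:ℝ) * 2 ^ (-(l:ℤ)) - (i':ℝ) * 2 ^ (-(l':ℤ))) * 2 ^ ((l':ℤ))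
      = (i:ℝ) * ((2:ℝ) ^ (-(l:ℤ)) * 2 ^ ((l':ℤ))) - (i':ℝ) * ((2:ℝ) ^ (-(l':ℤ)) * 2 ^ ((l':ℤ))) := by
    ring
  rw [this, e1, e2]
  push_cast
  rw [zpow_natCast]
  ring

lemma node_mem (l i : ℕ) (hi : i ≤ 2 ^ l) : (i : ℝ) * 2 ^ (-(l : ℤ)) ∈ Set.Icc (0 : ℝ) 1 := by
  constructor
  · positivity
  · have hle : (i : ℝ) ≤ 2 ^ l := by exact_mod_cast hi
    have : (i:ℝ) * 2 ^ (-(l:ℤ)) ≤ (2:ℝ) ^ l * 2 ^ (-(l:ℤ)) :=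
      mul_le_mul_of_nonneg_right hle (by positivity)
    calc (i:ℝ) * 2 ^ (-(l:ℤ)) ≤ (2:ℝ) ^ l * 2 ^ (-(l:ℤ)) := this
      _ = 1 := by
        rw [← zpow_natCast (2:ℝ) l, ← zpow_add₀ (two_ne_zero)]
        simp
/-- The one-dimensional hierarchical hat functions of levels `1 ≤ l ≤ n` are linearly
independent (as functions `[0,1] → ℝ`), and the nodal space `V_n` has dimension `2^n - 1`. -/
theorem hierarchical_linearIndependent_and_dim (n : ℕ) (hn : 1 ≤ n) :
    LinearIndependent ℝ
        (fun p : {q : ℕ × ℕ // 1 ≤ q.1 ∧ q.1 ≤ n ∧ Odd q.2 ∧ 1 ≤ q.2 ∧ q.2 ≤ 2 ^ q.1 - 1} =>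
          (fun x : Set.Icc (0 : ℝ) 1 => hatLI p.1.1 p.1.2 x.1)) ∧
      Module.finrank ℝ
          (Submodule.span ℝ
            {g : Set.Icc (0 : ℝ) 1 → ℝ |
              ∃ i : ℕ, 1 ≤ i ∧ i ≤ 2 ^ n - 1 ∧ g = fun x => hatLI n i x.1}) =
        2 ^ n - 1 := by
  constructor
  · -- linear independence of the hierarchical family
    rw [linearIndependent_iff']
    intro s g hsum p hp
    suffices H : ∀ L : ℕ, ∀ p ∈ s, (p : ℕ × ℕ).1 = L → g p = 0 from H p.1.1 p hp rfl
    intro L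
    induction L using Nat.strong_induction_on with
    | _ L ih =>
      intro p hp hpl
      obtain ⟨⟨l, i⟩, hc⟩ := p
      simp only at hpl
      subst hpl
      obtain ⟨hl1, hln, hodd, hi1, hi2⟩ := hc
      have hil : i ≤ 2 ^ l := le_trans hi2 (Nat.sub_le _ _)
      have hx := node_mem l i hil
      have heval := congrFun hsum ⟨(i : ℝ) * 2 ^ (-(l : ℤ)), hx⟩
      simp only [Finset.sum_apply, Pi.smul_apply, smul_eq_mul, Pi.zero_apply] at heval
      have hterm : ∀ q ∈ s, q ≠ ⟨(l, i), hl1, hln, hodd, hi1, hi2⟩ →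
          g q * hatLI (q : ℕ × ℕ).1 (q : ℕ × ℕ).2 ((i : ℝ) * 2 ^ (-(l : ℤ))) = 0 := by
        intro q hq hne
        obtain ⟨⟨l', i'⟩, hc'⟩ := q
        rcases lt_trichotomy l' l with h | h | h
        · rw [ih l' h ⟨(l', i'), hc'⟩ hq rfl, zero_mul]
        · subst h
          have hne' : i ≠ i' := by
            intro e; exact hne (by simp [e])
          rw [eval_node l' l' i i' le_rfl]
          simp only [Nat.sub_self, pow_zero, mul_one]
          rw [hat_cast_ne i i' hne', mul_zero]
        · rw [eval_node l l' i i' h.le]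
          have hev : i * 2 ^ (l' - l) ≠ i' := by
            have h1 : Even (i * 2 ^ (l' - l)) := by
              have : l' - l ≠ 0 := by omega
              exact (Nat.even_pow.2 ⟨even_two, this⟩).mul_left i
            have h2 : Odd i' := hc'.2.2.1
            intro e; rw [e] at h1; exact (Nat.not_even_iff_odd.2 h2) h1
          rw [hat_cast_ne _ _ hev, mul_zero]
      rw [Finset.sum_eq_single_of_mem _ hp hterm] at heval
      simp only at heval
      rw [eval_node l l i i le_rfl] at heval
      simp only [Nat.sub_self, pow_zero, mul_one, sub_self, hat_zero, mul_one] at heval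
      exact heval
  · -- dimension of the nodal space
    set f : Fin (2 ^ n - 1) → (Set.Icc (0 : ℝ) 1 → ℝ) :=
      fun j => fun x => hatLI n ((j : ℕ) + 1) x.1 with hf_def
    have h2n : 1 ≤ 2 ^ n := Nat.one_le_two_pow
    have hset : {g : Set.Icc (0 : ℝ) 1 → ℝ |
        ∃ i : ℕ, 1 ≤ i ∧ i ≤ 2 ^ n - 1 ∧ g = fun x => hatLI n i x.1} = Set.range f := by
      ext g
      constructor
      · rintro ⟨i, h1, h2, rfl⟩
        refine ⟨⟨i - 1, by omega⟩, ?_⟩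
        simp only [hf_def, Fin.val_mk]
        have : i - 1 + 1 = i := by omega
        rw [this]
      · rintro ⟨j, rfl⟩
        exact ⟨(j : ℕ) + 1, by omega, by have := j.isLt; omega, rfl⟩
    have hli : LinearIndependent ℝ f := by
      rw [Fintype.linearIndependent_iff]
      intro g hg j
      have hjle : (j : ℕ) + 1 ≤ 2 ^ n := by have := j.isLt; omega
      have hx := node_mem n ((j : ℕ) + 1) hjle
      have heval := congrFun hg ⟨((j : ℕ) + 1 : ℕ) * 2 ^ (-(n : ℤ)), hx⟩
      simp only [Finset.sum_apply, Pi.smul_apply, smul_eq_mul, Pi.zero_apply, hf_def] at heval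
      rw [Finset.sum_eq_single_of_mem j (Finset.mem_univ j)] at heval
      · rw [eval_node n n _ _ le_rfl] at heval
        simpa [hat_zero] using heval
      · intro q _ hne
        rw [eval_node n n _ _ le_rfl]
        have : (q : ℕ) + 1 ≠ (j : ℕ) + 1 := by
          intro e; exact hne (Fin.ext (by omega))
        simp only [Nat.sub_self, pow_zero, mul_one]
        rw [hat_cast_ne _ _ (Ne.symm this), mul_zero]
    rw [hset]
    rw [finrank_span_eq_card hli]
    simp
end

section
/- The dimension of the sparse grid space in d dimensions with level n satisfies the bound ∑_{k=0}^{n-1} 2^k C(d-1+k, d-1) ≤ 2^n · n^{d-1} · C for some constant C depending only on d; in particular it is O(2^n n^{d-1}) as n → ∞ for fixed d. -/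
/-- The dimension of the sparse grid space is `O(2^n n^{d-1})` for fixed `d`. -/
theorem sparse_grid_count_bound (d : ℕ) (hd : 1 ≤ d) :
    ∃ C : ℝ, 0 < C ∧ ∀ n : ℕ, 1 ≤ n →
      ((∑ k ∈ Finset.range n, 2 ^ k * Nat.choose (d - 1 + k) (d - 1) : ℕ) : ℝ)
        ≤ C * 2 ^ n * (n : ℝ) ^ (d - 1) := by
  refine ⟨(d : ℝ) ^ (d - 1), by positivity, ?_⟩
  intro n hn
  have key : (∑ k ∈ Finset.range n, 2 ^ k * Nat.choose (d - 1 + k) (d - 1))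
      ≤ d ^ (d - 1) * 2 ^ n * n ^ (d - 1) := by
    calc ∑ k ∈ Finset.range n, 2 ^ k * Nat.choose (d - 1 + k) (d - 1)
        ≤ ∑ k ∈ Finset.range n, 2 ^ k * (d * n) ^ (d - 1) := by
          refine Finset.sum_le_sum fun k hk => ?_
          refine Nat.mul_le_mul_left _ ?_
          calc Nat.choose (d - 1 + k) (d - 1) ≤ (d - 1 + k) ^ (d - 1) :=
                Nat.choose_le_pow _ _
            _ ≤ (d * n) ^ (d - 1) := by
                refine Nat.pow_le_pow_left ?_ _
                have hk' : k ≤ n - 1 := Nat.le_sub_one_of_lt (Finset.mem_range.mp hk)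
                have : d - 1 + k ≤ (d - 1) + (n - 1) := by omega
                refine this.trans ?_
                have := Nat.one_le_iff_ne_zero.mp hd
                nlinarith [Nat.one_le_iff_ne_zero.mp hn, hd, hn,
                  Nat.sub_add_cancel hd, Nat.sub_add_cancel hn]
      _ = (∑ k ∈ Finset.range n, 2 ^ k) * (d * n) ^ (d - 1) := by
          rw [Finset.sum_mul]
      _ ≤ 2 ^ n * (d * n) ^ (d - 1) := by
          refine Nat.mul_le_mul_right _ ?_
          have := Nat.geomSum_eq (le_refl 2) n
          calc ∑ k ∈ Finset.range n, 2 ^ k ≤ 2 ^ n - 1 := by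
                rw [Nat.geomSum_eq (le_refl 2) n]; omega
            _ ≤ 2 ^ n := Nat.sub_le _ _
      _ = d ^ (d - 1) * 2 ^ n * n ^ (d - 1) := by ring
  calc ((∑ k ∈ Finset.range n, 2 ^ k * Nat.choose (d - 1 + k) (d - 1) : ℕ) : ℝ)
      ≤ ((d ^ (d - 1) * 2 ^ n * n ^ (d - 1) : ℕ) : ℝ) := by exact_mod_cast key
    _ = (d : ℝ) ^ (d - 1) * 2 ^ n * (n : ℝ) ^ (d - 1) := by push_cast; ring
end

section
/- For the one-dimensional hierarchical interpolant: if f : [0,1] → ℝ is C² with f(0) = f(1) = 0, and f_n = ∑_{l=1}^n ∑_{i odd} v_{l,i} φ_{l,i} is its hierarchical interpolant of level n, then ‖f - f_n‖_∞ ≤ ∑_{l > n} 2^{-1} 2^{-2l} ‖f''‖_∞ ≤ (1/6)·4^{-n}·‖f''‖_∞. -/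
/-- Hierarchical coefficient `v_{l,i} = f(x_{l,i}) - (f(x_{l,i}-h_l)+f(x_{l,i}+h_l))/2`. -/
noncomputable def hierCoeff (f : ℝ → ℝ) (l i : ℕ) : ℝ :=
  f ((i : ℝ) * (2 : ℝ) ^ (-(l : ℤ)))
    - (f ((i : ℝ) * (2 : ℝ) ^ (-(l : ℤ)) - (2 : ℝ) ^ (-(l : ℤ)))
        + f ((i : ℝ) * (2 : ℝ) ^ (-(l : ℤ)) + (2 : ℝ) ^ (-(l : ℤ)))) / 2

/-!
The level-`n` hierarchical sum is the piecewise linear interpolant of `f` on the dyadic grid of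
mesh `h = 2⁻ⁿ`: halving the mesh adds, on each cell, exactly the surplus `v_{l,i}` at the new
midpoint times its hat function, and the coarsest interpolant vanishes since `f 0 = f 1 = 0`.
On a cell `[a, b]` the linear interpolation error is at most `C/2 · (x - a)(b - x) ≤ C h² / 8`,
because `f - L - C/2 · (t - a)(b - t)` is convex and vanishes at `a` and `b`. Finally
`C h² / 8 ≤ 4⁻ⁿ C / 6`, which is the geometric tail `∑_{l > n} 2⁻¹ 4⁻ˡ C`.
-/

open Set

lemma hat_of_one_le_abs {t : ℝ} (ht : 1 ≤ |t|) : hat t = 0 := max_eq_left (by linarith)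

lemma hat_of_abs_le_one {t : ℝ} (ht : |t| ≤ 1) : hat t = 1 - |t| := max_eq_right (by linarith)

lemma hatLI_eq (l i : ℕ) (x : ℝ) : hatLI l i x = hat (x * 2 ^ l - i) := by
  rw [hatLI, zpow_neg, zpow_natCast]
  congr 1
  field_simp

noncomputable def lineInterp (f : ℝ → ℝ) (a b x : ℝ) : ℝ :=
  f a + (x - a) / (b - a) * (f b - f a)

lemma sub_lineInterp_le_of_hasDerivAt2 {f f' f'' : ℝ → ℝ} {a b C x : ℝ}
    (hf : ContinuousOn f (Icc a b)) (hf' : ∀ t ∈ Ioo a b, HasDerivAt f (f' t) t)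
    (hf'' : ∀ t ∈ Ioo a b, HasDerivAt f' (f'' t) t) (hC : ∀ t ∈ Ioo a b, -C ≤ f'' t)
    (hx : x ∈ Icc a b) :
    f x - lineInterp f a b x ≤ C / 2 * ((x - a) * (b - x)) := by
  have hab : a ≤ b := hx.1.trans hx.2
  set g : ℝ → ℝ := fun t ↦ f t - lineInterp f a b t - C / 2 * ((t - a) * (b - t))
  have hg : ConvexOn ℝ (Icc a b) g := by
    refine convexOn_of_hasDerivWithinAt2_nonneg (convex_Icc a b)
      (by simp only [g, lineInterp]; fun_prop)
      (f' := fun t ↦ f' t - (f b - f a) / (b - a) - C / 2 * (a + b - 2 * t))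
      (f'' := fun t ↦ f'' t + C) ?_ ?_ ?_ <;> rw [interior_Icc] <;> intro t ht
    · have hline : HasDerivAt (lineInterp f a b) ((f b - f a) / (b - a)) t :=
        ((((hasDerivAt_id t).sub_const a).div_const (b - a)).mul_const (f b - f a)).const_add (f a)
          |>.congr_deriv (by ring)
      have hquad : HasDerivAt (fun t ↦ (t - a) * (b - t)) (a + b - 2 * t) t :=
        (((hasDerivAt_id t).sub_const a).mul ((hasDerivAt_id t).const_sub b)).congr_deriv
          (by simp only [id]; ring)
      exact (((hf' t ht).sub hline).sub (hquad.const_mul (C / 2))).hasDerivWithinAt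
    · have hlin : HasDerivAt (fun t : ℝ ↦ a + b - 2 * t) (-2) t :=
        (((hasDerivAt_id t).const_mul 2).const_sub (a + b)).congr_deriv (by ring)
      exact (((hf'' t ht).sub_const _).sub (hlin.const_mul (C / 2))).hasDerivWithinAt
        |>.congr_deriv (by ring)
    · linarith [hC t ht]
  have hga : g a = 0 := by simp [g, lineInterp]
  have hgb : g b = 0 := by
    rcases hab.eq_or_lt with rfl | hab
    · simp [g, lineInterp]
    · simp only [g, lineInterp]; field_simp; ring
  have := hg.le_on_segment (left_mem_Icc.2 hab) (right_mem_Icc.2 hab)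
    (by rwa [segment_eq_Icc hab])
  rw [hga, hgb, max_self] at this
  simp only [g] at this
  linarith

lemma abs_sub_lineInterp_le_of_hasDerivAt2 {f f' f'' : ℝ → ℝ} {a b C x : ℝ}
    (hf : ContinuousOn f (Icc a b)) (hf' : ∀ t ∈ Ioo a b, HasDerivAt f (f' t) t)
    (hf'' : ∀ t ∈ Ioo a b, HasDerivAt f' (f'' t) t) (hC : ∀ t ∈ Ioo a b, |f'' t| ≤ C)
    (hx : x ∈ Icc a b) :
    |f x - lineInterp f a b x| ≤ C / 2 * ((x - a) * (b - x)) := by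
  have hneg := sub_lineInterp_le_of_hasDerivAt2 (f := -f) (f' := -f') (f'' := -f'') hf.neg
    (fun t ht ↦ (hf' t ht).neg) (fun t ht ↦ (hf'' t ht).neg)
    (fun t ht ↦ by simpa using (abs_le.1 (hC t ht)).2) hx
  have hpos := sub_lineInterp_le_of_hasDerivAt2 hf hf' hf''
    (fun t ht ↦ (abs_le.1 (hC t ht)).1) hx
  simp only [lineInterp, Pi.neg_apply] at hneg hpos ⊢
  rw [abs_le]
  constructor <;> linarith

/-- The piecewise linear interpolant of `f` at the nodes `k * h`, `k : ℕ`; for `x ≥ 0` the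
cell containing `x` is `[k * h, (k + 1) * h)` with `k = ⌊x / h⌋₊`. -/
noncomputable def gridInterp (f : ℝ → ℝ) (h x : ℝ) : ℝ :=
  f (⌊x / h⌋₊ * h) + (x / h - ⌊x / h⌋₊) * (f ((⌊x / h⌋₊ + 1) * h) - f (⌊x / h⌋₊ * h))

lemma gridInterp_of_floor_eq (f : ℝ → ℝ) {h x : ℝ} {k : ℕ} (hk : ⌊x / h⌋₊ = k) :
    gridInterp f h x = f (k * h) + (x / h - k) * (f ((k + 1) * h) - f (k * h)) := by
  rw [gridInterp, hk]

lemma abs_sub_gridInterp_le {f : ℝ → ℝ} {C h x : ℝ} {N : ℕ}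
    (hf : ContDiffOn ℝ 2 f (Icc 0 1)) (hC : ∀ t ∈ Icc (0 : ℝ) 1, |deriv (deriv f) t| ≤ C)
    (hNh : N * h = 1) (hx : x ∈ Icc 0 1) :
    |f x - gridInterp f h x| ≤ C / 8 * h ^ 2 := by
  have hh : 0 < h := pos_of_mul_pos_right (hNh ▸ one_pos) N.cast_nonneg
  have hC0 : 0 ≤ C := (abs_nonneg _).trans (hC x hx)
  have hN : 1 / h = N := by rw [← hNh, mul_div_cancel_right₀ _ hh.ne']
  rcases hx.2.eq_or_lt with rfl | hx1
  · rw [gridInterp_of_floor_eq f (k := N) (by rw [hN, Nat.floor_natCast]), hN, hNh]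
    simpa using by positivity
  set k := ⌊x / h⌋₊ with hk
  have hkN : k + 1 ≤ (N : ℝ) := by
    exact_mod_cast (Nat.floor_lt (div_nonneg hx.1 hh.le)).2
      (hN ▸ div_lt_div_of_pos_right hx1 hh)
  have hka : k * h ≤ x := (le_div_iff₀ hh).1 (Nat.floor_le (div_nonneg hx.1 hh.le))
  have hkb : x < (k + 1) * h := (div_lt_iff₀ hh).1 (Nat.lt_floor_add_one _)
  have hcell : Icc (k * h) ((k + 1) * h) ⊆ Icc 0 1 :=
    Icc_subset_Icc (by positivity) ((mul_le_mul_of_nonneg_right hkN hh.le).trans_eq hNh)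
  have hint : Ioo (k * h) ((k + 1) * h) ⊆ interior (Icc 0 1) :=
    interior_Icc (a := k * h) ▸ interior_mono hcell
  have hf₂ := hf.mono interior_subset
  have hf' : ∀ t ∈ interior (Icc (0 : ℝ) 1), HasDerivAt f (deriv f t) t := fun t ht ↦
    ((hf₂.contDiffAt (isOpen_interior.mem_nhds ht)).differentiableAt two_ne_zero).hasDerivAt
  have hf'' : ∀ t ∈ interior (Icc (0 : ℝ) 1), HasDerivAt (deriv f) (deriv (deriv f) t) t :=
    fun t ht ↦ (((hf₂.deriv_of_isOpen isOpen_interior (m := 1) (by norm_num)).contDiffAt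
      (isOpen_interior.mem_nhds ht)).differentiableAt one_ne_zero).hasDerivAt
  have hquad : (x - k * h) * ((k + 1) * h - x) ≤ h ^ 2 / 4 := by
    nlinarith [four_mul_le_sq_add (x - k * h) ((k + 1) * h - x)]
  calc |f x - gridInterp f h x| = |f x - lineInterp f (k * h) ((k + 1) * h) x| := by
        rw [gridInterp_of_floor_eq f hk.symm, lineInterp]; congr 4; field_simp; ring
    _ ≤ C / 2 * ((x - k * h) * ((k + 1) * h - x)) :=
        abs_sub_lineInterp_le_of_hasDerivAt2 (hf.continuousOn.mono hcell)
          (fun t ht ↦ hf' t (hint ht)) (fun t ht ↦ hf'' t (hint ht))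
          (fun t ht ↦ hC t (interior_subset (hint ht))) ⟨hka, hkb.le⟩
    _ ≤ C / 2 * (h ^ 2 / 4) := by gcongr
    _ = C / 8 * h ^ 2 := by ring

lemma gridInterp_sub_gridInterp_two_mul (f : ℝ → ℝ) {h x : ℝ} (hh : 0 < h) (hx : 0 ≤ x)
    {k : ℕ} (hk : ⌊x / (2 * h)⌋₊ = k) :
    gridInterp f h x - gridInterp f (2 * h) x =
      (f ((2 * k + 1 : ℕ) * h) - (f ((2 * k + 1 : ℕ) * h - h) + f ((2 * k + 1 : ℕ) * h + h)) / 2)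
        * hat (x / h - (2 * k + 1 : ℕ)) := by
  have hx2 : x / (2 * h) = x / h / 2 := by ring
  have hk₁ : (k : ℝ) ≤ x / h / 2 := hx2 ▸ hk ▸ Nat.floor_le (by positivity)
  have hk₂ : x / h / 2 < k + 1 := hx2 ▸ hk ▸ Nat.lt_floor_add_one _
  have hleft : ((2 * k + 1 : ℕ) : ℝ) * h - h = k * (2 * h) := by push_cast; ring
  have hright : ((2 * k + 1 : ℕ) : ℝ) * h + h = (k + 1) * (2 * h) := by push_cast; ring
  have hfine : ((2 * k : ℕ) : ℝ) * h = k * (2 * h) := by push_cast; ring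
  have hfine' : (((2 * k + 1 : ℕ) : ℝ) + 1) * h = (k + 1) * (2 * h) := by push_cast; ring
  rw [gridInterp_of_floor_eq f hk, hleft, hright]
  rcases lt_or_ge (x / h) (2 * k + 1) with hlo | hhi
  · have hfl : ⌊x / h⌋₊ = 2 * k :=
      (Nat.floor_eq_iff (by positivity)).2 ⟨by push_cast; linarith, by push_cast; linarith⟩
    rw [gridInterp_of_floor_eq f hfl, hfine, Nat.cast_succ (2 * k),
      hat_of_abs_le_one (abs_le.2 ⟨by push_cast; linarith, by push_cast; linarith⟩),
      abs_of_neg (by push_cast; linarith)]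
    push_cast
    ring
  · have hfl : ⌊x / h⌋₊ = 2 * k + 1 :=
      (Nat.floor_eq_iff (by positivity)).2 ⟨by push_cast; linarith, by push_cast; linarith⟩
    rw [gridInterp_of_floor_eq f hfl, hfine',
      hat_of_abs_le_one (abs_le.2 ⟨by push_cast; linarith, by push_cast; linarith⟩),
      abs_of_nonneg (by push_cast; linarith)]
    push_cast
    ring

lemma sum_odd_mul_hat_eq (c : ℕ → ℝ) {y : ℝ} {N : ℕ} (hy : y ∈ Icc 0 (N : ℝ)) :
    ∑ i ∈ (Finset.Icc 1 (2 * N - 1)).filter (fun i => Odd i), c i * hat (2 * y - i) =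
      c (2 * ⌊y⌋₊ + 1) * hat (2 * y - (2 * ⌊y⌋₊ + 1 : ℕ)) := by
  have hk₁ : (⌊y⌋₊ : ℝ) ≤ y := Nat.floor_le hy.1
  have hk₂ : y < ⌊y⌋₊ + 1 := Nat.lt_floor_add_one y
  refine Finset.sum_eq_single _ (fun i hi hne ↦ ?_) (fun hk ↦ ?_)
  · obtain ⟨j, rfl⟩ := (Finset.mem_filter.1 hi).2
    rw [hat_of_one_le_abs, mul_zero]
    rcases lt_or_gt_of_ne (show j ≠ ⌊y⌋₊ by omega) with hj | hj
    · have : (j : ℝ) + 1 ≤ ⌊y⌋₊ := by exact_mod_cast hj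
      exact le_abs.2 (Or.inl (by push_cast; linarith))
    · have : (⌊y⌋₊ : ℝ) + 1 ≤ j := by exact_mod_cast hj
      exact le_abs.2 (Or.inr (by push_cast; linarith))
  · have hkN : N ≤ ⌊y⌋₊ := by simp only [Finset.mem_filter, Finset.mem_Icc] at hk; grind
    have hyk : y = ⌊y⌋₊ := le_antisymm (hy.2.trans (by exact_mod_cast hkN)) hk₁
    rw [hat_of_one_le_abs, mul_zero]
    rw [hyk]
    push_cast
    norm_num

lemma sum_hierCoeff_mul_hatLI (f : ℝ → ℝ) (l : ℕ) {x : ℝ} (hx : x ∈ Icc 0 1) :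
    ∑ i ∈ (Finset.Icc 1 (2 ^ (l + 1) - 1)).filter (fun i => Odd i),
        hierCoeff f (l + 1) i * hatLI (l + 1) i x =
      gridInterp f (2 ^ (-((l + 1 : ℕ) : ℤ))) x - gridInterp f (2 ^ (-(l : ℤ))) x := by
  have h2h : 2 * (2 : ℝ) ^ (-((l + 1 : ℕ) : ℤ)) = 2 ^ (-(l : ℤ)) := by
    rw [zpow_neg, zpow_neg, zpow_natCast, zpow_natCast, pow_succ]
    field_simp
  have hxl : x / 2 ^ (-(l : ℤ)) = x * 2 ^ l := by rw [zpow_neg, zpow_natCast, div_inv_eq_mul]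
  have hxl' : x / 2 ^ (-((l + 1 : ℕ) : ℤ)) = 2 * (x * 2 ^ l) := by
    rw [zpow_neg, zpow_natCast, div_inv_eq_mul, pow_succ]; ring
  have hy : x * 2 ^ l ∈ Icc 0 ((2 ^ l : ℕ) : ℝ) :=
    ⟨mul_nonneg hx.1 (by positivity),
      by push_cast; exact mul_le_of_le_one_left (by positivity) hx.2⟩
  have hhat : ∀ i : ℕ, hatLI (l + 1) i x = hat (2 * (x * 2 ^ l) - i) := fun i ↦ by
    rw [hatLI_eq, pow_succ]; ring_nf
  simp_rw [hhat, pow_succ' 2 l]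
  rw [sum_odd_mul_hat_eq _ hy, ← h2h, gridInterp_sub_gridInterp_two_mul f (by positivity) hx.1
    (by rw [h2h, hxl]), hxl', hierCoeff]

lemma gridInterp_one_eq_zero {f : ℝ → ℝ} (hf0 : f 0 = 0) (hf1 : f 1 = 0) {x : ℝ}
    (hx : x ∈ Icc 0 1) : gridInterp f 1 x = 0 := by
  rcases hx.2.eq_or_lt with rfl | hx1
  · simp [gridInterp, hf1]
  · simp [gridInterp, Nat.floor_eq_zero.2 hx1, hf0, hf1]

lemma gridInterp_eq_sum_hierCoeff_mul_hatLI {f : ℝ → ℝ} (hf0 : f 0 = 0) (hf1 : f 1 = 0)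
    (n : ℕ) {x : ℝ} (hx : x ∈ Icc 0 1) :
    gridInterp f (2 ^ (-(n : ℤ))) x = ∑ l ∈ Finset.Icc 1 n,
      ∑ i ∈ (Finset.Icc 1 (2 ^ l - 1)).filter (fun i => Odd i),
        hierCoeff f l i * hatLI l i x := by
  induction n with
  | zero => simpa using gridInterp_one_eq_zero hf0 hf1 hx
  | succ n ih => rw [Finset.sum_Icc_succ_top (by omega), ← ih, sum_hierCoeff_mul_hatLI f n hx]; ring

lemma tsum_inv_two_mul_two_zpow_eq (n : ℕ) :
    ∑' m : ℕ, 2⁻¹ * (2 : ℝ) ^ (-(2 * ((n : ℤ) + 1 + (m : ℤ)))) = 1 / 6 * (4 : ℝ) ^ (-(n : ℤ)) := by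
  have hterm : ∀ m : ℕ, 2⁻¹ * (2 : ℝ) ^ (-(2 * ((n : ℤ) + 1 + (m : ℤ)))) =
      8⁻¹ * (4 : ℝ) ^ (-(n : ℤ)) * 4⁻¹ ^ m := fun m ↦ by
    rw [show -(2 * ((n : ℤ) + 1 + m)) = 2 * (-n + -1 + -m) by ring, zpow_mul,
      zpow_add₀ (by norm_num), zpow_add₀ (by norm_num), zpow_neg _ (m : ℤ), zpow_natCast,
      ← inv_pow]
    norm_num
    ring
  simp_rw [hterm]
  rw [tsum_mul_left, tsum_geometric_of_lt_one (by norm_num) (by norm_num)]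
  ring

theorem hierarchical_interpolant_error_general (f : ℝ → ℝ)
    (hf : ContDiffOn ℝ 2 f (Set.Icc 0 1)) (hf0 : f 0 = 0) (hf1 : f 1 = 0)
    (C : ℝ) (hC : ∀ x ∈ Set.Icc (0 : ℝ) 1, |deriv (deriv f) x| ≤ C)
    (n : ℕ) :
    (∀ x ∈ Set.Icc (0 : ℝ) 1,
      |f x - ∑ l ∈ Finset.Icc 1 n,
          ∑ i ∈ (Finset.Icc 1 (2 ^ l - 1)).filter (fun i => Odd i),
            hierCoeff f l i * hatLI l i x|
        ≤ (∑' m : ℕ, 2⁻¹ * (2 : ℝ) ^ (-(2 * ((n : ℤ) + 1 + (m : ℤ))))) * C) ∧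
    (∑' m : ℕ, 2⁻¹ * (2 : ℝ) ^ (-(2 * ((n : ℤ) + 1 + (m : ℤ))))) * C
      ≤ 1 / 6 * (4 : ℝ) ^ (-(n : ℤ)) * C := by
  rw [tsum_inv_two_mul_two_zpow_eq n]
  refine ⟨fun x hx ↦ ?_, le_rfl⟩
  have hC0 : 0 ≤ C := (abs_nonneg _).trans (hC x hx)
  have hgrid : ((2 ^ n : ℕ) : ℝ) * 2 ^ (-(n : ℤ)) = 1 := by
    rw [zpow_neg, zpow_natCast]; push_cast; exact mul_inv_cancel₀ (by positivity)
  have hsq : ((2 : ℝ) ^ (-(n : ℤ))) ^ 2 = 4 ^ (-(n : ℤ)) := by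
    rw [sq, ← mul_zpow]; norm_num
  rw [← gridInterp_eq_sum_hierCoeff_mul_hatLI hf0 hf1 n hx]
  calc _ ≤ C / 8 * ((2 : ℝ) ^ (-(n : ℤ))) ^ 2 := abs_sub_gridInterp_le hf hC hgrid hx
    _ ≤ 1 / 6 * (4 : ℝ) ^ (-(n : ℤ)) * C := by
      rw [hsq]; linarith [mul_nonneg hC0 (zpow_nonneg (by norm_num : (0 : ℝ) ≤ 4) (-(n : ℤ)))]

/-- Error bound for the one-dimensional hierarchical interpolant of level `n`:
`‖f - f_n‖_∞ ≤ ∑_{l>n} 2^{-1} 2^{-2l} ‖f''‖_∞ ≤ (1/6)·4^{-n}·‖f''‖_∞`. -/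
theorem hierarchical_interpolant_error (f : ℝ → ℝ)
    (hf : ContDiffOn ℝ 2 f (Set.Icc 0 1)) (hf0 : f 0 = 0) (hf1 : f 1 = 0)
    (C : ℝ) (hC : ∀ x ∈ Set.Icc (0 : ℝ) 1, |deriv (deriv f) x| ≤ C)
    (n : ℕ) (hn : 1 ≤ n) :
    (∀ x ∈ Set.Icc (0 : ℝ) 1,
      |f x - ∑ l ∈ Finset.Icc 1 n,
          ∑ i ∈ (Finset.Icc 1 (2 ^ l - 1)).filter (fun i => Odd i),
            hierCoeff f l i * hatLI l i x|
        ≤ (∑' m : ℕ, 2⁻¹ * (2 : ℝ) ^ (-(2 * ((n : ℤ) + 1 + (m : ℤ))))) * C) ∧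
    (∑' m : ℕ, 2⁻¹ * (2 : ℝ) ^ (-(2 * ((n : ℤ) + 1 + (m : ℤ))))) * C
      ≤ 1 / 6 * (4 : ℝ) ^ (-(n : ℤ)) * C :=
  hierarchical_interpolant_error_general f hf hf0 hf1 C hC n
end
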